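/- Let Q ⊂ ℝ^d be a domain of finite measure, and P, G : ℝ → ℝ non-decreasing continuous functions. Suppose ρ_n is a sequence of measurable functions on Q such that P(ρ_n) → p̄, G(ρ_n) → ḡ, and P(ρ_n)G(ρ_n) → h̄ weakly in L¹(Q). Then p̄ · ḡ ≤ h̄ almost everywhere in Q. -/

import Mathlib

open MeasureTheory Filter Topology
open scoped ENNReal

/-- Weak convergence in L¹(μ): testing against all bounded (L^∞) functions. -/
def WeakL1Conv {α : Type*} [MeasurableSpace α] (μ : Measure α)
    (f : ℕ → α → ℝ) (F : α → ℝ) : Prop :=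
  ∀ φ : α → ℝ, MemLp φ ⊤ μ →
    Tendsto (fun n => ∫ x, f n x * φ x ∂μ) atTop (𝓝 (∫ x, F x * φ x ∂μ))

/-!
Minty's trick. For every `t`, monotonicity gives `(P(ρₙ) - P(t)) * (G(ρₙ) - G(t)) ≥ 0`, and in the
weak limit `h̄ - p̄ ḡ + (p̄ - P(t)) * (ḡ - G(t)) ≥ 0` a.e.; by continuity in `t` this holds for all
real `t` at once outside one null set. Weak limits stay in the closed convex hull of the values, so
`p̄`, `ḡ` lie a.e. in the closures of the intervals `range P`, `range G`. There the infimum over `t`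
of `(p̄ - P(t)) * (ḡ - G(t))` is `≤ 0`: either a value is attained, or both factors tend to `0` as
`t → ±∞`, or the factors have opposite signs.
-/

open Set

namespace WeakL1Conv

variable {α : Type*} [MeasurableSpace α] {μ : Measure α} {f g : ℕ → α → ℝ} {F G : α → ℝ}

theorem tendsto_setIntegral (h : WeakL1Conv μ f F) {s : Set α} (hs : MeasurableSet s) :
    Tendsto (fun n => ∫ x in s, f n x ∂μ) atTop (𝓝 (∫ x in s, F x ∂μ)) := by
  have hind : MemLp (s.indicator fun _ => (1 : ℝ)) ⊤ μ := (memLp_top_const 1).indicator hs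
  have hmul : ∀ u : α → ℝ, (fun x => u x * s.indicator (fun _ => (1 : ℝ)) x) = s.indicator u := by
    intro u
    funext x
    by_cases hx : x ∈ s <;> simp [hx]
  simpa only [hmul, integral_indicator hs] using h _ hind

theorem ae_nonneg (h : WeakL1Conv μ f F) (hF : Integrable F μ) (hf : ∀ n, ∀ᵐ x ∂μ, 0 ≤ f n x) :
    ∀ᵐ x ∂μ, 0 ≤ F x :=
  ae_nonneg_of_forall_setIntegral_nonneg hF fun _ hs _ =>
    ge_of_tendsto' (h.tendsto_setIntegral hs) fun n => setIntegral_nonneg_of_ae (hf n)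

theorem const_mul (h : WeakL1Conv μ f F) (c : ℝ) :
    WeakL1Conv μ (fun n x => c * f n x) (fun x => c * F x) := by
  intro φ hφ
  simpa only [mul_assoc, integral_const_mul] using (h φ hφ).const_mul c

theorem sub (hf : ∀ n, Integrable (f n) μ) (hF : Integrable F μ) (hg : ∀ n, Integrable (g n) μ)
    (hG : Integrable G μ) (h₁ : WeakL1Conv μ f F) (h₂ : WeakL1Conv μ g G) :
    WeakL1Conv μ (fun n x => f n x - g n x) (fun x => F x - G x) := by
  intro φ hφ
  have hint : ∀ u, Integrable u μ → Integrable (fun x => u x * φ x) μ :=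
    fun u hu => hu.mul_of_top_left hφ
  simp only [sub_mul]
  rw [integral_sub (hint F hF) (hint G hG)]
  refine ((h₁ φ hφ).sub (h₂ φ hφ)).congr fun n => ?_
  rw [integral_sub (hint _ (hf n)) (hint _ (hg n))]

theorem add_const [IsFiniteMeasure μ] (hf : ∀ n, Integrable (f n) μ) (hF : Integrable F μ)
    (h : WeakL1Conv μ f F) (c : ℝ) :
    WeakL1Conv μ (fun n x => f n x + c) (fun x => F x + c) := by
  intro φ hφ
  have hint : ∀ u, Integrable u μ → Integrable (fun x => u x * φ x) μ :=
    fun u hu => hu.mul_of_top_left hφ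
  have hφc : Integrable (fun x => c * φ x) μ := (hφ.integrable le_top).const_mul c
  simp only [add_mul]
  rw [integral_add (hint F hF) hφc, integral_const_mul]
  refine ((h φ hφ).add_const _).congr fun n => ?_
  rw [integral_add (hint _ (hf n)) hφc, integral_const_mul]

theorem ae_ge_of_forall_ge [IsFiniteMeasure μ] (hf : ∀ n, Integrable (f n) μ) (hF : Integrable F μ)
    (h : WeakL1Conv μ f F) {c : ℝ} (hcf : ∀ n x, c ≤ f n x) : ∀ᵐ x ∂μ, c ≤ F x := by
  have hlim := (h.add_const hf hF (-c)).ae_nonneg (hF.add (integrable_const (-c)))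
    fun n => .of_forall fun x => by linarith [hcf n x]
  filter_upwards [hlim] with x hx
  linarith

theorem ae_le_of_forall_le [IsFiniteMeasure μ] (hf : ∀ n, Integrable (f n) μ) (hF : Integrable F μ)
    (h : WeakL1Conv μ f F) {c : ℝ} (hfc : ∀ n x, f n x ≤ c) : ∀ᵐ x ∂μ, F x ≤ c := by
  have hlim := (h.const_mul (-1)).ae_ge_of_forall_ge (fun n => (hf n).const_mul _)
    (hF.const_mul _) (c := -c) fun n x => by linarith [hfc n x]
  filter_upwards [hlim] with x hx
  linarith

/-- Weak limits of functions with values in `S` take values in the closed convex hull of `S`. -/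
theorem ae_mem_bounds [IsFiniteMeasure μ] (hf : ∀ n, Integrable (f n) μ)
    (hF : Integrable F μ) (h : WeakL1Conv μ f F) {S : Set ℝ} (hS : S.Nonempty)
    (hfS : ∀ n x, f n x ∈ S) :
    ∀ᵐ x ∂μ, F x ∈ lowerBounds (upperBounds S) ∩ upperBounds (lowerBounds S) := by
  have hup : ∀ᵐ x ∂μ, F x ∈ lowerBounds (upperBounds S) := by
    by_cases hbdd : BddAbove S
    · filter_upwards [h.ae_le_of_forall_le hf hF fun n x => le_csSup hbdd (hfS n x)] with x hx c hc
      exact hx.trans (csSup_le hS hc)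
    · simp [not_nonempty_iff_eq_empty.1 hbdd]
  have hlow : ∀ᵐ x ∂μ, F x ∈ upperBounds (lowerBounds S) := by
    by_cases hbdd : BddBelow S
    · filter_upwards [h.ae_ge_of_forall_ge hf hF fun n x => csInf_le hbdd (hfS n x)] with x hx c hc
      exact (le_csInf hS hc).trans hx
    · simp [not_nonempty_iff_eq_empty.1 hbdd]
  filter_upwards [hup, hlow] with x h₁ h₂ using ⟨h₁, h₂⟩

end WeakL1Conv

theorem Continuous.mem_range_or_isLUB_or_isGLB {X β : Type*} [TopologicalSpace X]
    [PreconnectedSpace X] [LinearOrder β] [TopologicalSpace β] [OrderClosedTopology β]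
    {f : X → β} (hf : Continuous f) {a : β}
    (ha : a ∈ lowerBounds (upperBounds (range f)) ∩ upperBounds (lowerBounds (range f))) :
    a ∈ range f ∨ IsLUB (range f) a ∨ IsGLB (range f) a := by
  by_cases hup : a ∈ upperBounds (range f)
  · exact Or.inr (Or.inl ⟨hup, ha.1⟩)
  by_cases hlow : a ∈ lowerBounds (range f)
  · exact Or.inr (Or.inr ⟨hlow, ha.2⟩)
  obtain ⟨_, ⟨s, rfl⟩, hs⟩ := not_forall₂.1 hup
  obtain ⟨_, ⟨t, rfl⟩, ht⟩ := not_forall₂.1 hlow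
  exact Or.inl (intermediate_value_univ t s hf ⟨(not_le.1 ht).le, (not_le.1 hs).le⟩)

theorem le_zero_of_forall_le_sub_mul_sub {P G : ℝ → ℝ} (hPm : Monotone P) (hPc : Continuous P)
    (hGm : Monotone G) (hGc : Continuous G) {a b c : ℝ}
    (ha : a ∈ lowerBounds (upperBounds (range P)) ∩ upperBounds (lowerBounds (range P)))
    (hb : b ∈ lowerBounds (upperBounds (range G)) ∩ upperBounds (lowerBounds (range G)))
    (hc : ∀ t, c ≤ (a - P t) * (b - G t)) : c ≤ 0 := by
  have of_tendsto : ∀ l : Filter ℝ, l.NeBot → Tendsto P l (𝓝 a) → Tendsto G l (𝓝 b) → c ≤ 0 := by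
    intro l _ hP hG
    have hlim := (tendsto_const_nhds (x := a) |>.sub hP).mul (tendsto_const_nhds (x := b) |>.sub hG)
    rw [sub_self, sub_self, zero_mul] at hlim
    exact ge_of_tendsto' hlim hc
  rcases hPc.mem_range_or_isLUB_or_isGLB ha with ⟨t, rfl⟩ | haL | haG
  · simpa using hc t
  all_goals rcases hGc.mem_range_or_isLUB_or_isGLB hb with ⟨t, rfl⟩ | hbL | hbG
  · simpa using hc t
  · exact of_tendsto atTop inferInstance (tendsto_atTop_isLUB hPm haL) (tendsto_atTop_isLUB hGm hbL)
  · exact (hc 0).trans (mul_nonpos_of_nonneg_of_nonpos (sub_nonneg.2 (haL.1 ⟨0, rfl⟩))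
      (sub_nonpos.2 (hbG.1 ⟨0, rfl⟩)))
  · simpa using hc t
  · exact (hc 0).trans (mul_nonpos_of_nonpos_of_nonneg (sub_nonpos.2 (haG.1 ⟨0, rfl⟩))
      (sub_nonneg.2 (hbL.1 ⟨0, rfl⟩)))
  · exact of_tendsto atBot inferInstance (tendsto_atBot_isGLB hPm haG) (tendsto_atBot_isGLB hGm hbG)

theorem WeakL1Conv.ae_mul_sub_le_sub_mul_sub {α : Type*} [MeasurableSpace α] {μ : Measure α}
    [IsFiniteMeasure μ] {P G : ℝ → ℝ} (hPm : Monotone P) (hGm : Monotone G) {ρ : ℕ → α → ℝ}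
    {pbar gbar hbar : α → ℝ}
    (hPint : ∀ n, Integrable (fun x => P (ρ n x)) μ)
    (hGint : ∀ n, Integrable (fun x => G (ρ n x)) μ)
    (hPGint : ∀ n, Integrable (fun x => P (ρ n x) * G (ρ n x)) μ)
    (hpbar : Integrable pbar μ) (hgbar : Integrable gbar μ) (hhbar : Integrable hbar μ)
    (hPw : WeakL1Conv μ (fun n x => P (ρ n x)) pbar)
    (hGw : WeakL1Conv μ (fun n x => G (ρ n x)) gbar)
    (hPGw : WeakL1Conv μ (fun n x => P (ρ n x) * G (ρ n x)) hbar) (t : ℝ) :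
    ∀ᵐ x ∂μ, pbar x * gbar x - hbar x ≤ (pbar x - P t) * (gbar x - G t) := by
  have h₁ : WeakL1Conv μ (fun n x => P (ρ n x) * G (ρ n x) - P t * G (ρ n x))
      (fun x => hbar x - P t * gbar x) :=
    hPGw.sub hPGint hhbar (fun n => (hGint n).const_mul _) (hgbar.const_mul _) (hGw.const_mul _)
  have h₂ : WeakL1Conv μ (fun n x => P (ρ n x) * G (ρ n x) - P t * G (ρ n x) - G t * P (ρ n x))
      (fun x => hbar x - P t * gbar x - G t * pbar x) :=
    h₁.sub (fun n => (hPGint n).sub ((hGint n).const_mul _)) (hhbar.sub (hgbar.const_mul _))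
      (fun n => (hPint n).const_mul _) (hpbar.const_mul _) (hPw.const_mul _)
  have hlim : Integrable (fun x => hbar x - P t * gbar x - G t * pbar x) μ :=
    (hhbar.sub (hgbar.const_mul _)).sub (hpbar.const_mul _)
  have hseq : ∀ n,
      Integrable (fun x => P (ρ n x) * G (ρ n x) - P t * G (ρ n x) - G t * P (ρ n x)) μ :=
    fun n => ((hPGint n).sub ((hGint n).const_mul _)).sub ((hPint n).const_mul _)
  have h₃ := h₂.add_const hseq hlim (P t * G t)
  refine (h₃.ae_nonneg (hlim.add (integrable_const _)) fun n => .of_forall fun x => ?_).mono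
    fun x hx => by linear_combination hx
  linear_combination (hGm.monovary hPm).sub_mul_sub_nonneg t (ρ n x)

theorem stmt_7_general {d : ℕ} (Q : Set (Fin d → ℝ))
    (hQ : volume Q < ⊤) (P G : ℝ → ℝ)
    (hPmono : Monotone P) (hPcont : Continuous P)
    (hGmono : Monotone G) (hGcont : Continuous G)
    (ρ : ℕ → (Fin d → ℝ) → ℝ)
    (pbar gbar hbar : (Fin d → ℝ) → ℝ)
    (hPint : ∀ n, Integrable (fun x => P (ρ n x)) (volume.restrict Q))
    (hGint : ∀ n, Integrable (fun x => G (ρ n x)) (volume.restrict Q))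
    (hPGint : ∀ n, Integrable (fun x => P (ρ n x) * G (ρ n x)) (volume.restrict Q))
    (hpbar : Integrable pbar (volume.restrict Q))
    (hgbar : Integrable gbar (volume.restrict Q))
    (hhbar : Integrable hbar (volume.restrict Q))
    (hPw : WeakL1Conv (volume.restrict Q) (fun n x => P (ρ n x)) pbar)
    (hGw : WeakL1Conv (volume.restrict Q) (fun n x => G (ρ n x)) gbar)
    (hPGw : WeakL1Conv (volume.restrict Q) (fun n x => P (ρ n x) * G (ρ n x)) hbar) :
    ∀ᵐ x ∂(volume.restrict Q), pbar x * gbar x ≤ hbar x := by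
  have : IsFiniteMeasure (volume.restrict Q) := ⟨by rwa [Measure.restrict_apply_univ]⟩
  have hpbar_mem := hPw.ae_mem_bounds hPint hpbar (range_nonempty P) fun n x => mem_range_self _
  have hgbar_mem := hGw.ae_mem_bounds hGint hgbar (range_nonempty G) fun n x => mem_range_self _
  have hrat : ∀ᵐ x ∂(volume.restrict Q), ∀ q : ℚ,
      pbar x * gbar x - hbar x ≤ (pbar x - P q) * (gbar x - G q) :=
    ae_all_iff.2 fun q => WeakL1Conv.ae_mul_sub_le_sub_mul_sub hPmono hGmono hPint hGint hPGint
      hpbar hgbar hhbar hPw hGw hPGw q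
  filter_upwards [hpbar_mem, hgbar_mem, hrat] with x hpx hgx hqx
  have hreal : ∀ t : ℝ, pbar x * gbar x - hbar x ≤ (pbar x - P t) * (gbar x - G t) := fun t =>
    Rat.denseRange_cast.induction_on t
      (isClosed_le continuous_const ((continuous_const.sub hPcont).mul (continuous_const.sub hGcont)))
      hqx
  linarith [le_zero_of_forall_le_sub_mul_sub hPmono hPcont hGmono hGcont hpx hgx hreal]

/-- If P, G are non-decreasing continuous, P(ρ_n) → p̄, G(ρ_n) → ḡ and
P(ρ_n)G(ρ_n) → h̄ weakly in L¹(Q), then p̄·ḡ ≤ h̄ a.e. in Q. -/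
theorem stmt_7 {d : ℕ} (Q : Set (Fin d → ℝ)) (hQm : MeasurableSet Q)
    (hQ : volume Q < ⊤) (P G : ℝ → ℝ)
    (hPmono : Monotone P) (hPcont : Continuous P)
    (hGmono : Monotone G) (hGcont : Continuous G)
    (ρ : ℕ → (Fin d → ℝ) → ℝ) (hmeas : ∀ n, AEMeasurable (ρ n) (volume.restrict Q))
    (pbar gbar hbar : (Fin d → ℝ) → ℝ)
    (hPint : ∀ n, Integrable (fun x => P (ρ n x)) (volume.restrict Q))
    (hGint : ∀ n, Integrable (fun x => G (ρ n x)) (volume.restrict Q))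
    (hPGint : ∀ n, Integrable (fun x => P (ρ n x) * G (ρ n x)) (volume.restrict Q))
    (hpbar : Integrable pbar (volume.restrict Q))
    (hgbar : Integrable gbar (volume.restrict Q))
    (hhbar : Integrable hbar (volume.restrict Q))
    (hPw : WeakL1Conv (volume.restrict Q) (fun n x => P (ρ n x)) pbar)
    (hGw : WeakL1Conv (volume.restrict Q) (fun n x => G (ρ n x)) gbar)
    (hPGw : WeakL1Conv (volume.restrict Q) (fun n x => P (ρ n x) * G (ρ n x)) hbar) :
    ∀ᵐ x ∂(volume.restrict Q), pbar x * gbar x ≤ hbar x :=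
  stmt_7_general Q hQ P G hPmono hPcont hGmono hGcont ρ pbar gbar hbar hPint hGint hPGint hpbar
    hgbar hhbar hPw hGw hPGw
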